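/- T-*-decomposition theorem (FEL): for any T-term P and *-term Q, the unique T-*-decomposition of fe(P ∧• Q) is (fe(P)[T↦□], fe(Q)). -/
import Mathlib


/-! Shared definitions for left-sequential logics (FEL and SCL),
    evaluation trees, and decompositions. -/

/-- FEL-terms over atoms `A` (`and` = full left-sequential conjunction `∧•`,
    `or` = full left-sequential disjunction `∨•`). -/
inductive FTerm (A : Type) : Type
  | atom : A → FTerm A
  | tru  : FTerm A
  | fls  : FTerm A
  | neg  : FTerm A → FTerm A
  | and  : FTerm A → FTerm A → FTerm A
  | or   : FTerm A → FTerm A → FTerm A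

/-- SCL-terms over atoms `A` (`and` = short-circuit conjunction `∧◦`,
    `or` = short-circuit disjunction `∨◦`). -/
inductive STerm (A : Type) : Type
  | atom : A → STerm A
  | tru  : STerm A
  | fls  : STerm A
  | neg  : STerm A → STerm A
  | and  : STerm A → STerm A → STerm A
  | or   : STerm A → STerm A → STerm A

/-- Evaluation trees: finite binary trees over `A` with leaves `T`, `F`. -/
inductive ETree (A : Type) : Type
  | tru  : ETree A
  | fls  : ETree A
  | node : ETree A → A → ETree A → ETree A

namespace ETree

/-- `X.subst Y Z = X[T↦Y, F↦Z]`. -/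
def subst {A : Type} : ETree A → ETree A → ETree A → ETree A
  | .tru, y, _ => y
  | .fls, _, z => z
  | .node l a r, y, z => .node (subst l y z) a (subst r y z)

def hasTru {A : Type} : ETree A → Prop
  | .tru => True
  | .fls => False
  | .node l _ r => hasTru l ∨ hasTru r

def hasFls {A : Type} : ETree A → Prop
  | .tru => False
  | .fls => True
  | .node l _ r => hasFls l ∨ hasFls r

def depth {A : Type} : ETree A → ℕ
  | .tru => 0
  | .fls => 0
  | .node l _ r => 1 + max (depth l) (depth r)

end ETree

/-- The full evaluation function `fe : FTerm → 𝒯`. -/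
def fe {A : Type} : FTerm A → ETree A
  | FTerm.tru => ETree.tru
  | FTerm.fls => ETree.fls
  | FTerm.atom a => ETree.node ETree.tru a ETree.fls
  | FTerm.neg p => (fe p).subst ETree.fls ETree.tru
  | FTerm.and p q => (fe p).subst (fe q) ((fe q).subst ETree.fls ETree.fls)
  | FTerm.or p q => (fe p).subst ((fe q).subst ETree.tru ETree.tru) (fe q)

/-- The short-circuit evaluation function `se : STerm → 𝒯`. -/
def se {A : Type} : STerm A → ETree A
  | STerm.tru => ETree.tru
  | STerm.fls => ETree.fls
  | STerm.atom a => ETree.node ETree.tru a ETree.fls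
  | STerm.neg p => (se p).subst ETree.fls ETree.tru
  | STerm.and p q => (se p).subst (se q) ETree.fls
  | STerm.or p q => (se p).subst ETree.tru (se q)

/-- Derivability from EqFFEL by equational logic. -/
inductive EqFFEL {A : Type} : FTerm A → FTerm A → Prop
  | refl (p : FTerm A) : EqFFEL p p
  | symm {p q : FTerm A} : EqFFEL p q → EqFFEL q p
  | trans {p q r : FTerm A} : EqFFEL p q → EqFFEL q r → EqFFEL p r
  | neg_congr {p q : FTerm A} : EqFFEL p q → EqFFEL (FTerm.neg p) (FTerm.neg q)
  | and_congr {p p' q q' : FTerm A} :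
      EqFFEL p p' → EqFFEL q q' → EqFFEL (FTerm.and p q) (FTerm.and p' q')
  | or_congr {p p' q q' : FTerm A} :
      EqFFEL p p' → EqFFEL q q' → EqFFEL (FTerm.or p q) (FTerm.or p' q')
  | fel1 : EqFFEL FTerm.fls (FTerm.neg FTerm.tru)
  | fel2 (x y : FTerm A) : EqFFEL (FTerm.or x y) (FTerm.neg (FTerm.and (FTerm.neg x) (FTerm.neg y)))
  | fel3 (x : FTerm A) : EqFFEL (FTerm.neg (FTerm.neg x)) x
  | fel4 (x y z : FTerm A) : EqFFEL (FTerm.and (FTerm.and x y) z) (FTerm.and x (FTerm.and y z))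
  | fel5 (x : FTerm A) : EqFFEL (FTerm.and FTerm.tru x) x
  | fel6 (x : FTerm A) : EqFFEL (FTerm.and x FTerm.tru) x
  | fel7 (x : FTerm A) : EqFFEL (FTerm.and x FTerm.fls) (FTerm.and FTerm.fls x)
  | fel8 (x : FTerm A) : EqFFEL (FTerm.and x FTerm.fls) (FTerm.and (FTerm.neg x) FTerm.fls)
  | fel9 (x y : FTerm A) :
      EqFFEL (FTerm.or (FTerm.and x FTerm.fls) y) (FTerm.and (FTerm.or x FTerm.tru) y)
  | fel10 (x y : FTerm A) :
      EqFFEL (FTerm.or x (FTerm.and y FTerm.fls)) (FTerm.and x (FTerm.or y FTerm.tru))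

/-- Derivability from EqFSCL by equational logic. -/
inductive EqFSCL {A : Type} : STerm A → STerm A → Prop
  | refl (p : STerm A) : EqFSCL p p
  | symm {p q : STerm A} : EqFSCL p q → EqFSCL q p
  | trans {p q r : STerm A} : EqFSCL p q → EqFSCL q r → EqFSCL p r
  | neg_congr {p q : STerm A} : EqFSCL p q → EqFSCL (STerm.neg p) (STerm.neg q)
  | and_congr {p p' q q' : STerm A} :
      EqFSCL p p' → EqFSCL q q' → EqFSCL (STerm.and p q) (STerm.and p' q')
  | or_congr {p p' q q' : STerm A} :
      EqFSCL p p' → EqFSCL q q' → EqFSCL (STerm.or p q) (STerm.or p' q')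
  | scl1 : EqFSCL STerm.fls (STerm.neg STerm.tru)
  | scl2 (x y : STerm A) : EqFSCL (STerm.or x y) (STerm.neg (STerm.and (STerm.neg x) (STerm.neg y)))
  | scl3 (x : STerm A) : EqFSCL (STerm.neg (STerm.neg x)) x
  | scl4 (x y z : STerm A) : EqFSCL (STerm.and (STerm.and x y) z) (STerm.and x (STerm.and y z))
  | scl5 (x : STerm A) : EqFSCL (STerm.and STerm.tru x) x
  | scl6 (x : STerm A) : EqFSCL (STerm.and x STerm.tru) x
  | scl7 (x : STerm A) : EqFSCL (STerm.and STerm.fls x) STerm.fls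
  | scl8 (x : STerm A) : EqFSCL (STerm.and x STerm.fls) (STerm.and (STerm.neg x) STerm.fls)
  | scl9 (x y : STerm A) :
      EqFSCL (STerm.or (STerm.and x STerm.fls) y) (STerm.and (STerm.or x STerm.tru) y)
  | scl10 (x y z : STerm A) :
      EqFSCL (STerm.or (STerm.and x y) (STerm.and z STerm.fls))
             (STerm.and (STerm.or x (STerm.and z STerm.fls)) (STerm.or y (STerm.and z STerm.fls)))

/-! ### FEL Normal Form grammar -/

/-- T-terms: `P^T ::= T | a ∨• P^T`. -/
inductive IsFT_T {A : Type} : FTerm A → Prop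
  | tru : IsFT_T FTerm.tru
  | or (a : A) {p : FTerm A} : IsFT_T p → IsFT_T (FTerm.or (FTerm.atom a) p)

/-- F-terms: `P^F ::= F | a ∧• P^F`. -/
inductive IsFT_F {A : Type} : FTerm A → Prop
  | fls : IsFT_F FTerm.fls
  | and (a : A) {p : FTerm A} : IsFT_F p → IsFT_F (FTerm.and (FTerm.atom a) p)

/-- ℓ-terms: `P^ℓ ::= a ∧• P^T | ¬a ∧• P^T`. -/
inductive IsFT_L {A : Type} : FTerm A → Prop
  | pos (a : A) {p : FTerm A} : IsFT_T p → IsFT_L (FTerm.and (FTerm.atom a) p)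
  | neg (a : A) {p : FTerm A} : IsFT_T p → IsFT_L (FTerm.and (FTerm.neg (FTerm.atom a)) p)

mutual
/-- `P^c ::= P^ℓ | P^* ∧• P^d`. -/
inductive IsFT_C {A : Type} : FTerm A → Prop
  | ell {p : FTerm A} : IsFT_L p → IsFT_C p
  | and {p q : FTerm A} : IsFT_Star p → IsFT_D q → IsFT_C (FTerm.and p q)
/-- `P^d ::= P^ℓ | P^* ∨• P^c`. -/
inductive IsFT_D {A : Type} : FTerm A → Prop
  | ell {p : FTerm A} : IsFT_L p → IsFT_D p
  | or {p q : FTerm A} : IsFT_Star p → IsFT_C q → IsFT_D (FTerm.or p q)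
/-- `P^* ::= P^c | P^d`. -/
inductive IsFT_Star {A : Type} : FTerm A → Prop
  | c {p : FTerm A} : IsFT_C p → IsFT_Star p
  | d {p : FTerm A} : IsFT_D p → IsFT_Star p
end

/-- FEL Normal Form: `P ::= P^T | P^F | P^T ∧• P^*`. -/
inductive IsFNF {A : Type} : FTerm A → Prop
  | t {p : FTerm A} : IsFT_T p → IsFNF p
  | f {p : FTerm A} : IsFT_F p → IsFNF p
  | ts {p q : FTerm A} : IsFT_T p → IsFT_Star q → IsFNF (FTerm.and p q)

/-! ### SCL Normal Form grammar -/

/-- T-terms: `P^T ::= T | (a ∧◦ P^T) ∨◦ P^T`. -/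
inductive IsST_T {A : Type} : STerm A → Prop
  | tru : IsST_T STerm.tru
  | or (a : A) {p q : STerm A} :
      IsST_T p → IsST_T q → IsST_T (STerm.or (STerm.and (STerm.atom a) p) q)

/-- F-terms: `P^F ::= F | (a ∨◦ P^F) ∧◦ P^F`. -/
inductive IsST_F {A : Type} : STerm A → Prop
  | fls : IsST_F STerm.fls
  | and (a : A) {p q : STerm A} :
      IsST_F p → IsST_F q → IsST_F (STerm.and (STerm.or (STerm.atom a) p) q)

/-- ℓ-terms: `P^ℓ ::= (a ∧◦ P^T) ∨◦ P^F | (¬a ∧◦ P^T) ∨◦ P^F`. -/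
inductive IsST_L {A : Type} : STerm A → Prop
  | pos (a : A) {p q : STerm A} :
      IsST_T p → IsST_F q → IsST_L (STerm.or (STerm.and (STerm.atom a) p) q)
  | neg (a : A) {p q : STerm A} :
      IsST_T p → IsST_F q → IsST_L (STerm.or (STerm.and (STerm.neg (STerm.atom a)) p) q)

mutual
/-- `P^c ::= P^ℓ | P^* ∧◦ P^d`. -/
inductive IsST_C {A : Type} : STerm A → Prop
  | ell {p : STerm A} : IsST_L p → IsST_C p
  | and {p q : STerm A} : IsST_Star p → IsST_D q → IsST_C (STerm.and p q)
/-- `P^d ::= P^ℓ | P^* ∨◦ P^c`. -/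
inductive IsST_D {A : Type} : STerm A → Prop
  | ell {p : STerm A} : IsST_L p → IsST_D p
  | or {p q : STerm A} : IsST_Star p → IsST_C q → IsST_D (STerm.or p q)
/-- `P^* ::= P^c | P^d`. -/
inductive IsST_Star {A : Type} : STerm A → Prop
  | c {p : STerm A} : IsST_C p → IsST_Star p
  | d {p : STerm A} : IsST_D p → IsST_Star p
end

/-- SCL Normal Form: `P ::= P^T | P^F | P^T ∧◦ P^*`. -/
inductive IsSNF {A : Type} : STerm A → Prop
  | t {p : STerm A} : IsST_T p → IsSNF p
  | f {p : STerm A} : IsST_F p → IsSNF p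
  | ts {p q : STerm A} : IsST_T p → IsST_Star q → IsSNF (STerm.and p q)

/-! ### Trees with box leaves -/

/-- `𝒯_□`: trees over `A` with leaves in `{T, F, □}`. -/
inductive ETreeB (A : Type) : Type
  | tru  : ETreeB A
  | fls  : ETreeB A
  | box  : ETreeB A
  | node : ETreeB A → A → ETreeB A → ETreeB A

namespace ETreeB

/-- `X.substBox Y = X[□↦Y]`. -/
def substBox {A : Type} : ETreeB A → ETree A → ETree A
  | .tru, _ => ETree.tru
  | .fls, _ => ETree.fls
  | .box, y => y
  | .node l a r, y => ETree.node (substBox l y) a (substBox r y)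

def hasBox {A : Type} : ETreeB A → Prop
  | .tru => False
  | .fls => False
  | .box => True
  | .node l _ r => hasBox l ∨ hasBox r

def hasTru {A : Type} : ETreeB A → Prop
  | .tru => True
  | .fls => False
  | .box => False
  | .node l _ r => hasTru l ∨ hasTru r

def hasFls {A : Type} : ETreeB A → Prop
  | .tru => False
  | .fls => True
  | .box => False
  | .node l _ r => hasFls l ∨ hasFls r

end ETreeB

/-- `𝒯_{1,2}`: trees over `A` with leaves in `{T, F, □₁, □₂}`. -/
inductive ETree2 (A : Type) : Type
  | tru  : ETree2 A
  | fls  : ETree2 A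
  | box1 : ETree2 A
  | box2 : ETree2 A
  | node : ETree2 A → A → ETree2 A → ETree2 A

namespace ETree2

/-- `X.substBoxes Y Z = X[□₁↦Y, □₂↦Z]`. -/
def substBoxes {A : Type} : ETree2 A → ETree A → ETree A → ETree A
  | .tru, _, _ => ETree.tru
  | .fls, _, _ => ETree.fls
  | .box1, y, _ => y
  | .box2, _, z => z
  | .node l a r, y, z => ETree.node (substBoxes l y z) a (substBoxes r y z)

def hasBox1 {A : Type} : ETree2 A → Prop
  | .tru => False
  | .fls => False
  | .box1 => True
  | .box2 => False
  | .node l _ r => hasBox1 l ∨ hasBox1 r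

def hasBox2 {A : Type} : ETree2 A → Prop
  | .tru => False
  | .fls => False
  | .box1 => False
  | .box2 => True
  | .node l _ r => hasBox2 l ∨ hasBox2 r

def hasTru {A : Type} : ETree2 A → Prop
  | .tru => True
  | .fls => False
  | .box1 => False
  | .box2 => False
  | .node l _ r => hasTru l ∨ hasTru r

def hasFls {A : Type} : ETree2 A → Prop
  | .tru => False
  | .fls => True
  | .box1 => False
  | .box2 => False
  | .node l _ r => hasFls l ∨ hasFls r

end ETree2

namespace ETree

/-- `X[T↦□₁, F↦□₂]`. -/
def toBoxes {A : Type} : ETree A → ETree2 A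
  | .tru => ETree2.box1
  | .fls => ETree2.box2
  | .node l a r => ETree2.node (toBoxes l) a (toBoxes r)

/-- `X[T↦□]`. -/
def truToBox {A : Type} : ETree A → ETreeB A
  | .tru => ETreeB.box
  | .fls => ETreeB.fls
  | .node l a r => ETreeB.node (truToBox l) a (truToBox r)

/-- `X[F↦□]`. -/
def flsToBox {A : Type} : ETree A → ETreeB A
  | .tru => ETreeB.tru
  | .fls => ETreeB.box
  | .node l a r => ETreeB.node (flsToBox l) a (flsToBox r)

end ETree

/-! ### FEL decompositions -/

/-- Candidate conjunction decomposition (FEL):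
    `X = Y[□₁↦Z, □₂↦Z[T↦F]]`, `Y` contains both boxes, neither `T` nor `F`,
    and `Z` contains both `T` and `F`. -/
def IsCcdF {A : Type} (X : ETree A) (Y : ETree2 A) (Z : ETree A) : Prop :=
  X = Y.substBoxes Z (Z.subst ETree.fls ETree.fls) ∧
  Y.hasBox1 ∧ Y.hasBox2 ∧ ¬ Y.hasTru ∧ ¬ Y.hasFls ∧ Z.hasTru ∧ Z.hasFls

/-- Candidate disjunction decomposition (FEL):
    `X = Y[□₁↦Z[F↦T], □₂↦Z]` with the same side conditions. -/
def IsCddF {A : Type} (X : ETree A) (Y : ETree2 A) (Z : ETree A) : Prop :=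
  X = Y.substBoxes (Z.subst ETree.tru ETree.tru) Z ∧
  Y.hasBox1 ∧ Y.hasBox2 ∧ ¬ Y.hasTru ∧ ¬ Y.hasFls ∧ Z.hasTru ∧ Z.hasFls

/-- Conjunction decomposition (FEL): a ccd with `Z` of minimal depth. -/
def IsCdF {A : Type} (X : ETree A) (Y : ETree2 A) (Z : ETree A) : Prop :=
  IsCcdF X Y Z ∧ ∀ (Y' : ETree2 A) (Z' : ETree A), IsCcdF X Y' Z' → Z.depth ≤ Z'.depth

/-- Disjunction decomposition (FEL): a cdd with `Z` of minimal depth. -/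
def IsDdF {A : Type} (X : ETree A) (Y : ETree2 A) (Z : ETree A) : Prop :=
  IsCddF X Y Z ∧ ∀ (Y' : ETree2 A) (Z' : ETree A), IsCddF X Y' Z' → Z.depth ≤ Z'.depth

/-- T-*-decomposition (FEL): `X = Y[□↦Z]`, `Y` contains neither `T` nor `F`,
    and `Z` admits no nontrivial box decomposition. -/
def IsTsdF {A : Type} (X : ETree A) (Y : ETreeB A) (Z : ETree A) : Prop :=
  X = Y.substBox Z ∧ ¬ Y.hasTru ∧ ¬ Y.hasFls ∧
  ¬ ∃ (U : ETreeB A) (V : ETree A),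
      Z = U.substBox V ∧ U.hasBox ∧ U ≠ ETreeB.box ∧ ¬ U.hasTru ∧ ¬ U.hasFls

/-! ### SCL decompositions -/

/-- Candidate conjunction decomposition (SCL): `X = Y[□↦Z]`, `Y` contains `□`,
    `Y` contains `F` but not `T`, and `Z` contains both `T` and `F`. -/
def IsCcdS {A : Type} (X : ETree A) (Y : ETreeB A) (Z : ETree A) : Prop :=
  X = Y.substBox Z ∧ Y.hasBox ∧ Y.hasFls ∧ ¬ Y.hasTru ∧ Z.hasTru ∧ Z.hasFls

/-- Candidate disjunction decomposition (SCL): `X = Y[□↦Z]`, `Y` contains `□`,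
    `Y` contains `T` but not `F`, and `Z` contains both `T` and `F`. -/
def IsCddS {A : Type} (X : ETree A) (Y : ETreeB A) (Z : ETree A) : Prop :=
  X = Y.substBox Z ∧ Y.hasBox ∧ Y.hasTru ∧ ¬ Y.hasFls ∧ Z.hasTru ∧ Z.hasFls

/-- Conjunction decomposition (SCL): a ccd with `Z` of minimal depth. -/
def IsCdS {A : Type} (X : ETree A) (Y : ETreeB A) (Z : ETree A) : Prop :=
  IsCcdS X Y Z ∧ ∀ (Y' : ETreeB A) (Z' : ETree A), IsCcdS X Y' Z' → Z.depth ≤ Z'.depth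

/-- Disjunction decomposition (SCL): a cdd with `Z` of minimal depth. -/
def IsDdS {A : Type} (X : ETree A) (Y : ETreeB A) (Z : ETree A) : Prop :=
  IsCddS X Y Z ∧ ∀ (Y' : ETreeB A) (Z' : ETree A), IsCddS X Y' Z' → Z.depth ≤ Z'.depth

/-- Candidate T-*-decomposition (SCL). -/
def IsCtsdS {A : Type} (X : ETree A) (Y : ETreeB A) (Z : ETree A) : Prop :=
  X = Y.substBox Z ∧ ¬ Y.hasTru ∧ ¬ Y.hasFls ∧
  ¬ ∃ (U : ETreeB A) (V : ETree A),
      Z = U.substBox V ∧ U.hasBox ∧ U ≠ ETreeB.box ∧ ¬ U.hasTru ∧ ¬ U.hasFls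

/-- T-*-decomposition (SCL): a ctsd with `Z` of minimal depth. -/
def IsTsdS {A : Type} (X : ETree A) (Y : ETreeB A) (Z : ETree A) : Prop :=
  IsCtsdS X Y Z ∧ ∀ (Y' : ETreeB A) (Z' : ETree A), IsCtsdS X Y' Z' → Z.depth ≤ Z'.depth

/-- The translation `h : FTerm → STerm` from FEL-terms to SCL-terms. -/
def hTrans {A : Type} : FTerm A → STerm A
  | FTerm.tru => STerm.tru
  | FTerm.fls => STerm.fls
  | FTerm.atom a => STerm.atom a
  | FTerm.neg p => STerm.neg (hTrans p)
  | FTerm.and p q => STerm.and (STerm.or (hTrans p) (STerm.and (hTrans q) STerm.fls)) (hTrans q)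
  | FTerm.or p q => STerm.or (STerm.and (hTrans p) (STerm.or (hTrans q) STerm.tru)) (hTrans q)

/-! ### Auxiliary lemmas for the T-*-decomposition theorem -/

namespace TsdAux

open ETree ETreeB

variable {A : Type}

/-- A tree is indecomposable (in the sense of the tsd side condition). -/
def Indec (Z : ETree A) : Prop :=
  ¬ ∃ (U : ETreeB A) (V : ETree A),
      Z = U.substBox V ∧ U.hasBox ∧ U ≠ ETreeB.box ∧ ¬ U.hasTru ∧ ¬ U.hasFls

lemma hasTru_or_hasFls (X : ETree A) : X.hasTru ∨ X.hasFls := by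
  induction X with
  | tru => left; trivial
  | fls => right; trivial
  | node l a r ihl ihr =>
    rcases ihl with h | h
    · exact Or.inl (Or.inl h)
    · exact Or.inr (Or.inl h)

lemma hasTru_subst (W Z1 Z2 : ETree A) :
    (W.subst Z1 Z2).hasTru ↔ (W.hasTru ∧ Z1.hasTru) ∨ (W.hasFls ∧ Z2.hasTru) := by
  induction W with
  | tru => simp [ETree.subst, ETree.hasTru, ETree.hasFls]
  | fls => simp [ETree.subst, ETree.hasTru, ETree.hasFls]
  | node l a r ihl ihr =>
    simp only [ETree.subst, ETree.hasTru, ETree.hasFls, ihl, ihr]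
    tauto

lemma hasFls_subst (W Z1 Z2 : ETree A) :
    (W.subst Z1 Z2).hasFls ↔ (W.hasTru ∧ Z1.hasFls) ∨ (W.hasFls ∧ Z2.hasFls) := by
  induction W with
  | tru => simp [ETree.subst, ETree.hasTru, ETree.hasFls]
  | fls => simp [ETree.subst, ETree.hasTru, ETree.hasFls]
  | node l a r ihl ihr =>
    simp only [ETree.subst, ETree.hasTru, ETree.hasFls, ihl, ihr]
    tauto

lemma hasBox_of_not (U : ETreeB A) (h1 : ¬ U.hasTru) (h2 : ¬ U.hasFls) : U.hasBox := by
  induction U with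
  | tru => exact absurd trivial h1
  | fls => exact absurd trivial h2
  | box => trivial
  | node l a r ihl ihr =>
    simp only [ETreeB.hasTru, ETreeB.hasFls, ETreeB.hasBox, not_or] at *
    exact Or.inl (ihl h1.1 h2.1)

lemma hasTru_substBox (U : ETreeB A) (V : ETree A) :
    (U.substBox V).hasTru ↔ U.hasTru ∨ (U.hasBox ∧ V.hasTru) := by
  induction U with
  | tru => simp [ETreeB.substBox, ETreeB.hasTru, ETreeB.hasBox, ETree.hasTru]
  | fls => simp [ETreeB.substBox, ETreeB.hasTru, ETreeB.hasBox, ETree.hasTru]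
  | box => simp [ETreeB.substBox, ETreeB.hasTru, ETreeB.hasBox]
  | node l a r ihl ihr =>
    simp only [ETreeB.substBox, ETreeB.hasTru, ETreeB.hasBox, ETree.hasTru, ihl, ihr]
    tauto

lemma hasFls_substBox (U : ETreeB A) (V : ETree A) :
    (U.substBox V).hasFls ↔ U.hasFls ∨ (U.hasBox ∧ V.hasFls) := by
  induction U with
  | tru => simp [ETreeB.substBox, ETreeB.hasFls, ETreeB.hasBox, ETree.hasFls]
  | fls => simp [ETreeB.substBox, ETreeB.hasFls, ETreeB.hasBox, ETree.hasFls]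
  | box => simp [ETreeB.substBox, ETreeB.hasFls, ETreeB.hasBox]
  | node l a r ihl ihr =>
    simp only [ETreeB.substBox, ETreeB.hasFls, ETreeB.hasBox, ETree.hasFls, ihl, ihr]
    tauto

lemma depth_subst_ge (W Z1 Z2 : ETree A) (h : Z1.depth = Z2.depth) :
    Z1.depth ≤ (W.subst Z1 Z2).depth := by
  induction W with
  | tru => simp [ETree.subst]
  | fls => simp [ETree.subst, h]
  | node l a r ihl ihr =>
    simp only [ETree.subst, ETree.depth]
    omega

lemma depth_subst_leaf (W Z1 Z2 : ETree A) (h1 : Z1.depth = 0) (h2 : Z2.depth = 0) :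
    (W.subst Z1 Z2).depth = W.depth := by
  induction W with
  | tru => simpa [ETree.subst, ETree.depth]
  | fls => simpa [ETree.subst, ETree.depth]
  | node l a r ihl ihr => simp [ETree.subst, ETree.depth, ihl, ihr]

lemma subst_inj (Z1 Z2 : ETree A) (hd : Z1.depth = Z2.depth) (hne : Z1 ≠ Z2) :
    ∀ W1 W2 : ETree A, W1.subst Z1 Z2 = W2.subst Z1 Z2 → W1 = W2 := by
  intro W1
  induction W1 with
  | tru =>
    intro W2 h
    cases W2 with
    | tru => rfl
    | fls => simp only [ETree.subst] at h; exact absurd h hne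
    | node l a r =>
      exfalso
      simp only [ETree.subst] at h
      have h1 := depth_subst_ge l Z1 Z2 hd
      have h2 := congrArg ETree.depth h
      simp only [ETree.depth] at h2
      omega
  | fls =>
    intro W2 h
    cases W2 with
    | tru => simp only [ETree.subst] at h; exact absurd h.symm hne
    | fls => rfl
    | node l a r =>
      exfalso
      simp only [ETree.subst] at h
      have h1 := depth_subst_ge l Z1 Z2 hd
      have h2 := congrArg ETree.depth h
      simp only [ETree.depth] at h2
      omega
  | node l a r ihl ihr =>
    intro W2 h
    cases W2 with
    | tru =>
      exfalso
      simp only [ETree.subst] at h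
      have h1 := depth_subst_ge l Z1 Z2 hd
      have h2 := congrArg ETree.depth h
      simp only [ETree.depth] at h2
      omega
    | fls =>
      exfalso
      simp only [ETree.subst] at h
      have h1 := depth_subst_ge l Z1 Z2 hd
      have h2 := congrArg ETree.depth h
      simp only [ETree.depth] at h2
      omega
    | node l' a' r' =>
      simp only [ETree.subst, ETree.node.injEq] at h
      obtain ⟨h1, h2, h3⟩ := h
      rw [ihl _ h1, h2, ihr _ h3]

lemma depth_substBox_ge (U : ETreeB A) (V : ETree A) (h : U.hasBox) :
    V.depth ≤ (U.substBox V).depth := by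
  induction U with
  | tru => exact absurd h id
  | fls => exact absurd h id
  | box => simp [ETreeB.substBox]
  | node l a r ihl ihr =>
    rcases h with h | h
    · have := ihl h; simp only [ETreeB.substBox, ETree.depth]; omega
    · have := ihr h; simp only [ETreeB.substBox, ETree.depth]; omega

/-- Key depth lemma for the conjunction case. -/
lemma depth_lt_and (Z : ETree A) (hT : Z.hasTru) (hInd : Indec Z) :
    ∀ (Y1 : ETree A) (U : ETreeB A) (V : ETree A),
      U.substBox V = Y1.subst Z (Z.subst ETree.fls ETree.fls) →
      ¬ U.hasTru → ¬ U.hasFls → V.hasTru → V.hasFls → Y1.hasFls →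
      Z.depth < V.depth := by
  have hdbar : (Z.subst ETree.fls ETree.fls).depth = Z.depth :=
    depth_subst_leaf Z ETree.fls ETree.fls rfl rfl
  have hbarT : ¬ (Z.subst ETree.fls ETree.fls).hasTru := by
    rw [hasTru_subst]; simp [ETree.hasTru]
  intro Y1
  induction Y1 with
  | tru => intro U V _ _ _ _ _ hF; exact absurd hF id
  | fls =>
    intro U V heq hUT hUF hVT hVF _
    cases U with
    | tru => exact absurd trivial hUT
    | fls => exact absurd trivial hUF
    | box =>
      exfalso
      simp only [ETreeB.substBox, ETree.subst] at heq
      rw [heq] at hVT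
      exact hbarT hVT
    | node l a r =>
      exfalso
      simp only [ETree.subst] at heq
      have hbox : (ETreeB.node l a r).hasBox := hasBox_of_not _ hUT hUF
      have : ((ETreeB.node l a r).substBox V).hasTru := by
        rw [hasTru_substBox]; exact Or.inr ⟨hbox, hVT⟩
      rw [heq] at this
      exact hbarT this
  | node l b r ihl ihr =>
    intro U V heq hUT hUF hVT hVF hF
    cases U with
    | tru => exact absurd trivial hUT
    | fls => exact absurd trivial hUF
    | box =>
      simp only [ETreeB.substBox, ETree.subst] at heq
      subst heq
      simp only [ETree.depth]
      have h1 : Z.depth ≤ (l.subst Z (Z.subst ETree.fls ETree.fls)).depth :=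
        depth_subst_ge _ _ _ hdbar.symm
      omega
    | node L a R =>
      simp only [ETreeB.substBox, ETree.subst, ETree.node.injEq] at heq
      obtain ⟨h1, _, h3⟩ := heq
      simp only [ETreeB.hasTru, ETreeB.hasFls, not_or] at hUT hUF
      rcases hF with hF | hF
      · exact ihl L V h1 hUT.1 hUF.1 hVT hVF hF
      · exact ihr R V h3 hUT.2 hUF.2 hVT hVF hF

/-- Key depth lemma for the disjunction case. -/
lemma depth_lt_or (Z : ETree A) (hF : Z.hasFls) (hInd : Indec Z) :
    ∀ (Y1 : ETree A) (U : ETreeB A) (V : ETree A),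
      U.substBox V = Y1.subst (Z.subst ETree.tru ETree.tru) Z →
      ¬ U.hasTru → ¬ U.hasFls → V.hasTru → V.hasFls → Y1.hasTru →
      Z.depth < V.depth := by
  have hdbar : (Z.subst ETree.tru ETree.tru).depth = Z.depth :=
    depth_subst_leaf Z ETree.tru ETree.tru rfl rfl
  have hbarF : ¬ (Z.subst ETree.tru ETree.tru).hasFls := by
    rw [hasFls_subst]; simp [ETree.hasFls]
  intro Y1
  induction Y1 with
  | fls => intro U V _ _ _ _ _ hT; exact absurd hT id
  | tru =>
    intro U V heq hUT hUF hVT hVF _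
    cases U with
    | tru => exact absurd trivial hUT
    | fls => exact absurd trivial hUF
    | box =>
      exfalso
      simp only [ETreeB.substBox, ETree.subst] at heq
      rw [heq] at hVF
      exact hbarF hVF
    | node l a r =>
      exfalso
      simp only [ETree.subst] at heq
      have hbox : (ETreeB.node l a r).hasBox := hasBox_of_not _ hUT hUF
      have : ((ETreeB.node l a r).substBox V).hasFls := by
        rw [hasFls_substBox]; exact Or.inr ⟨hbox, hVF⟩
      rw [heq] at this
      exact hbarF this
  | node l b r ihl ihr =>
    intro U V heq hUT hUF hVT hVF hT
    cases U with
    | tru => exact absurd trivial hUT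
    | fls => exact absurd trivial hUF
    | box =>
      simp only [ETreeB.substBox, ETree.subst] at heq
      subst heq
      simp only [ETree.depth]
      have h1 : (Z.subst ETree.tru ETree.tru).depth
          ≤ (l.subst (Z.subst ETree.tru ETree.tru) Z).depth :=
        depth_subst_ge _ _ _ hdbar
      omega
    | node L a R =>
      simp only [ETreeB.substBox, ETree.subst, ETree.node.injEq] at heq
      obtain ⟨h1, _, h3⟩ := heq
      simp only [ETreeB.hasTru, ETreeB.hasFls, not_or] at hUT hUF
      rcases hT with hT | hT
      · exact ihl L V h1 hUT.1 hUF.1 hVT hVF hT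
      · exact ihr R V h3 hUT.2 hUF.2 hVT hVF hT

/-- Lifting a box decomposition through a substitution. -/
lemma lift_decomp (Z1 Z2 : ETree A) (hd : Z1.depth = Z2.depth) (hne : Z1 ≠ Z2) :
    ∀ (U : ETreeB A) (Y1 : ETree A) (V : ETree A),
      U.substBox V = Y1.subst Z1 Z2 →
      ¬ U.hasTru → ¬ U.hasFls → Z1.depth < V.depth →
      ∃ V', V = V'.subst Z1 Z2 ∧ Y1 = U.substBox V' := by
  intro U
  induction U with
  | tru => intro Y1 V _ hUT _ _; exact absurd trivial hUT
  | fls => intro Y1 V _ _ hUF _; exact absurd trivial hUF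
  | box =>
    intro Y1 V heq _ _ _
    exact ⟨Y1, by simpa [ETreeB.substBox] using heq, rfl⟩
  | node L a R ihl ihr =>
    intro Y1 V heq hUT hUF hdepth
    simp only [ETreeB.hasTru, ETreeB.hasFls, not_or] at hUT hUF
    have hboxL : L.hasBox := hasBox_of_not _ hUT.1 hUF.1
    cases Y1 with
    | tru =>
      exfalso
      simp only [ETreeB.substBox, ETree.subst] at heq
      have h1 := depth_substBox_ge L V hboxL
      have h2 := congrArg ETree.depth heq
      simp only [ETree.depth] at h2
      omega
    | fls =>
      exfalso
      simp only [ETreeB.substBox, ETree.subst] at heq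
      have h1 := depth_substBox_ge L V hboxL
      have h2 := congrArg ETree.depth heq
      simp only [ETree.depth] at h2
      omega
    | node l b r =>
      simp only [ETreeB.substBox, ETree.subst, ETree.node.injEq] at heq
      obtain ⟨h1, h2, h3⟩ := heq
      obtain ⟨Vl, hVl, hl⟩ := ihl l V h1 hUT.1 hUF.1 hdepth
      obtain ⟨Vr, hVr, hr⟩ := ihr r V h3 hUT.2 hUF.2 hdepth
      have : Vl = Vr := subst_inj Z1 Z2 hd hne _ _ (hVl.symm.trans hVr)
      subst this
      exact ⟨Vl, hVl, by simp [ETreeB.substBox, hl, hr, h2]⟩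

/-- Uniqueness of box decompositions with indecomposable residue. -/
lemma uniq_decomp :
    ∀ (Y Y' : ETreeB A) (Z Z' : ETree A),
      Y.substBox Z = Y'.substBox Z' →
      ¬ Y.hasTru → ¬ Y.hasFls → ¬ Y'.hasTru → ¬ Y'.hasFls →
      Indec Z → Indec Z' → Y = Y' ∧ Z = Z' := by
  intro Y
  induction Y with
  | tru => intro Y' Z Z' _ hYT _ _ _ _ _; exact absurd trivial hYT
  | fls => intro Y' Z Z' _ _ hYF _ _ _ _; exact absurd trivial hYF
  | box =>
    intro Y' Z Z' heq _ _ hYT' hYF' hZ hZ'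
    cases Y' with
    | tru => exact absurd trivial hYT'
    | fls => exact absurd trivial hYF'
    | box => exact ⟨rfl, by simpa [ETreeB.substBox] using heq⟩
    | node L a R =>
      exfalso
      apply hZ
      exact ⟨ETreeB.node L a R, Z', by simpa [ETreeB.substBox] using heq,
        hasBox_of_not _ hYT' hYF', by simp, hYT', hYF'⟩
  | node L a R ihl ihr =>
    intro Y' Z Z' heq hYT hYF hYT' hYF' hZ hZ'
    cases Y' with
    | tru => exact absurd trivial hYT'
    | fls => exact absurd trivial hYF'
    | box =>
      exfalso
      apply hZ'
      refine ⟨ETreeB.node L a R, Z, ?_, hasBox_of_not _ hYT hYF, by simp, hYT, hYF⟩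
      simpa [ETreeB.substBox] using heq.symm
    | node L' a' R' =>
      simp only [ETreeB.substBox, ETree.node.injEq] at heq
      obtain ⟨h1, h2, h3⟩ := heq
      simp only [ETreeB.hasTru, ETreeB.hasFls, not_or] at hYT hYF hYT' hYF'
      obtain ⟨hL, hZZ⟩ := ihl L' Z Z' h1 hYT.1 hYF.1 hYT'.1 hYF'.1 hZ hZ'
      subst hZZ
      obtain ⟨hR, _⟩ := ihr R' Z Z h3 hYT.2 hYF.2 hYT'.2 hYF'.2 hZ hZ'
      rw [hL, hR, h2]
      exact ⟨rfl, rfl⟩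

/-- T-terms evaluate to trees with only `T`-leaves. -/
lemma tterm_no_fls {p : FTerm A} (hp : IsFT_T p) : ¬ (fe p).hasFls := by
  induction hp with
  | tru => exact id
  | or a hq ih =>
    show ¬ (ETree.node _ _ _).hasFls
    simp only [fe, ETree.subst, ETree.hasFls, not_or]
    refine ⟨?_, ih⟩
    rw [hasFls_subst]
    simp [ETree.hasFls]

/-- `*`-terms evaluate to good trees. -/
lemma star_good : ∀ (q : FTerm A), IsFT_Star q → (fe q).hasTru ∧ (fe q).hasFls ∧ Indec (fe q) := by
  intro q
  induction q with
  | atom a =>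
    intro h
    exfalso
    rcases h with h | h <;> rcases h with h | h <;> cases h
  | tru =>
    intro h
    exfalso
    rcases h with h | h <;> rcases h with h | h <;> cases h
  | fls =>
    intro h
    exfalso
    rcases h with h | h <;> rcases h with h | h <;> cases h
  | neg p ih =>
    intro h
    exfalso
    rcases h with h | h <;> rcases h with h | h <;> cases h
  | and q1 q2 ih1 ih2 =>
    intro h
    -- either an ℓ-term, or Star q1 ∧ D q2
    have hcases : IsFT_L (FTerm.and q1 q2) ∨ (IsFT_Star q1 ∧ IsFT_D q2) := by
      rcases h with h | h
      · cases h with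
        | ell hl => exact Or.inl hl
        | and hs hd => exact Or.inr ⟨hs, hd⟩
      · cases h with
        | ell hl => exact Or.inl hl
    rcases hcases with hl | ⟨hs1, hd2⟩
    · -- base case: ℓ-term
      -- fe q1 is either node tru a fls or node fls a tru; fe q2 has only T-leaves
      have key : ∀ (X1 X2 : ETree A) (a : A),
          (¬ X1.hasFls ∧ ¬ X2.hasTru) ∨ (¬ X1.hasTru ∧ ¬ X2.hasFls) →
          (X1.hasTru ∨ X2.hasTru) → (X1.hasFls ∨ X2.hasFls) →
          (ETree.node X1 a X2).hasTru ∧ (ETree.node X1 a X2).hasFls ∧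
          Indec (ETree.node X1 a X2) := by
        intro X1 X2 a hside hT hF
        refine ⟨hT, hF, ?_⟩
        rintro ⟨U, V, heq, hbox, hne, hUT, hUF⟩
        cases U with
        | tru => exact hUT trivial
        | fls => exact hUF trivial
        | box => exact hne rfl
        | node L b R =>
          simp only [ETreeB.substBox, ETree.node.injEq] at heq
          obtain ⟨h1, _, h3⟩ := heq
          simp only [ETreeB.hasTru, ETreeB.hasFls, not_or] at hUT hUF
          have hboxL : L.hasBox := hasBox_of_not _ hUT.1 hUF.1
          have hboxR : R.hasBox := hasBox_of_not _ hUT.2 hUF.2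
          have hVbad : ¬ V.hasFls ∧ ¬ V.hasTru := by
            rcases hside with ⟨hX1, hX2⟩ | ⟨hX1, hX2⟩
            · constructor
              · intro hv; exact hX1 (by rw [h1, hasFls_substBox]; exact Or.inr ⟨hboxL, hv⟩)
              · intro hv; exact hX2 (by rw [h3, hasTru_substBox]; exact Or.inr ⟨hboxR, hv⟩)
            · constructor
              · intro hv; exact hX2 (by rw [h3, hasFls_substBox]; exact Or.inr ⟨hboxR, hv⟩)
              · intro hv; exact hX1 (by rw [h1, hasTru_substBox]; exact Or.inr ⟨hboxL, hv⟩)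
          rcases hasTru_or_hasFls V with hv | hv
          · exact hVbad.2 hv
          · exact hVbad.1 hv
      cases hl with
      | pos a hT =>
        have h1 : ¬ (fe q2).hasFls := tterm_no_fls hT
        have h2 : ¬ ((fe q2).subst ETree.fls ETree.fls).hasTru := by
          rw [hasTru_subst]; simp [ETree.hasTru]
        have h3 : (fe q2).hasTru := (hasTru_or_hasFls _).resolve_right h1
        have h4 : ((fe q2).subst ETree.fls ETree.fls).hasFls := by
          rw [hasFls_subst]
          rcases hasTru_or_hasFls (fe q2) with h | h
          · exact Or.inl ⟨h, trivial⟩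
          · exact Or.inr ⟨h, trivial⟩
        exact key _ _ a (Or.inl ⟨h1, h2⟩) (Or.inl h3) (Or.inr h4)
      | neg a hT =>
        have h1 : ¬ (fe q2).hasFls := tterm_no_fls hT
        have h2 : ¬ ((fe q2).subst ETree.fls ETree.fls).hasTru := by
          rw [hasTru_subst]; simp [ETree.hasTru]
        have h3 : (fe q2).hasTru := (hasTru_or_hasFls _).resolve_right h1
        have h4 : ((fe q2).subst ETree.fls ETree.fls).hasFls := by
          rw [hasFls_subst]
          rcases hasTru_or_hasFls (fe q2) with h | h
          · exact Or.inl ⟨h, trivial⟩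
          · exact Or.inr ⟨h, trivial⟩
        exact key _ _ a (Or.inr ⟨h2, h1⟩) (Or.inr h3) (Or.inl h4)
    · -- inductive conjunction case
      obtain ⟨hT1, hF1, hI1⟩ := ih1 hs1
      obtain ⟨hT2, hF2, hI2⟩ := ih2 (IsFT_Star.d hd2)
      set Z := fe q2 with hZdef
      set Zb := Z.subst ETree.fls ETree.fls with hZbdef
      have hZbT : ¬ Zb.hasTru := by rw [hZbdef, hasTru_subst]; simp [ETree.hasTru]
      have hdb : Z.depth = Zb.depth := (depth_subst_leaf Z ETree.fls ETree.fls rfl rfl).symm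
      have hXeq : fe (FTerm.and q1 q2) = (fe q1).subst Z Zb := rfl
      refine ⟨?_, ?_, ?_⟩
      · rw [hXeq, hasTru_subst]; exact Or.inl ⟨hT1, hT2⟩
      · rw [hXeq, hasFls_subst]
        refine Or.inl ⟨hT1, hF2⟩
      · rintro ⟨U, V, heq, hbox, hne, hUT, hUF⟩
        rw [hXeq] at heq
        have hVT : V.hasTru := by
          have : ((fe q1).subst Z Zb).hasTru := by
            rw [hasTru_subst]; exact Or.inl ⟨hT1, hT2⟩
          rw [heq, hasTru_substBox] at this
          tauto
        have hVF : V.hasFls := by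
          have : ((fe q1).subst Z Zb).hasFls := by
            rw [hasFls_subst]; exact Or.inl ⟨hT1, hF2⟩
          rw [heq, hasFls_substBox] at this
          tauto
        have hdlt : Z.depth < V.depth :=
          depth_lt_and Z hT2 hI2 (fe q1) U V heq.symm hUT hUF hVT hVF hF1
        have hZne : Z ≠ Zb := fun h => hZbT (h ▸ hT2)
        obtain ⟨V', _, hY1⟩ :=
          lift_decomp Z Zb hdb hZne U (fe q1) V heq.symm hUT hUF hdlt
        exact hI1 ⟨U, V', hY1, hbox, hne, hUT, hUF⟩
  | or q1 q2 ih1 ih2 =>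
    intro h
    have hsc : IsFT_Star q1 ∧ IsFT_C q2 := by
      rcases h with h | h
      · cases h with
        | ell hl => cases hl
      · cases h with
        | ell hl => cases hl
        | or hs hc => exact ⟨hs, hc⟩
    obtain ⟨hs1, hc2⟩ := hsc
    obtain ⟨hT1, hF1, hI1⟩ := ih1 hs1
    obtain ⟨hT2, hF2, hI2⟩ := ih2 (IsFT_Star.c hc2)
    set Z := fe q2 with hZdef
    set Zt := Z.subst ETree.tru ETree.tru with hZtdef
    have hZtF : ¬ Zt.hasFls := by rw [hZtdef, hasFls_subst]; simp [ETree.hasFls]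
    have hZtT : Zt.hasTru := by
      rw [hZtdef, hasTru_subst]
      rcases hasTru_or_hasFls Z with h | h
      · exact Or.inl ⟨h, trivial⟩
      · exact Or.inr ⟨h, trivial⟩
    have hdb : Zt.depth = Z.depth := depth_subst_leaf Z ETree.tru ETree.tru rfl rfl
    have hXeq : fe (FTerm.or q1 q2) = (fe q1).subst Zt Z := rfl
    refine ⟨?_, ?_, ?_⟩
    · rw [hXeq, hasTru_subst]; exact Or.inl ⟨hT1, hZtT⟩
    · rw [hXeq, hasFls_subst]; exact Or.inr ⟨hF1, hF2⟩
    · rintro ⟨U, V, heq, hbox, hne, hUT, hUF⟩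
      rw [hXeq] at heq
      have hVT : V.hasTru := by
        have : ((fe q1).subst Zt Z).hasTru := by
          rw [hasTru_subst]; exact Or.inl ⟨hT1, hZtT⟩
        rw [heq, hasTru_substBox] at this
        tauto
      have hVF : V.hasFls := by
        have : ((fe q1).subst Zt Z).hasFls := by
          rw [hasFls_subst]; exact Or.inr ⟨hF1, hF2⟩
        rw [heq, hasFls_substBox] at this
        tauto
      have hdlt : Z.depth < V.depth :=
        depth_lt_or Z hF2 hI2 (fe q1) U V heq.symm hUT hUF hVT hVF hT1
      have hZne : Zt ≠ Z := fun h => hZtF (h.symm ▸ hF2)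
      obtain ⟨V', _, hY1⟩ :=
        lift_decomp Zt Z hdb hZne U (fe q1) V heq.symm hUT hUF (hdb ▸ hdlt)
      exact hI1 ⟨U, V', hY1, hbox, hne, hUT, hUF⟩

lemma truToBox_not_hasTru (W : ETree A) : ¬ W.truToBox.hasTru := by
  induction W with
  | tru => exact id
  | fls => exact id
  | node l a r ihl ihr =>
    simp only [ETree.truToBox, ETreeB.hasTru, not_or]
    exact ⟨ihl, ihr⟩

lemma truToBox_not_hasFls (W : ETree A) (h : ¬ W.hasFls) : ¬ W.truToBox.hasFls := by
  induction W with
  | tru => exact id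
  | fls => exact absurd trivial h
  | node l a r ihl ihr =>
    simp only [ETree.hasFls, not_or] at h
    simp only [ETree.truToBox, ETreeB.hasFls, not_or]
    exact ⟨ihl h.1, ihr h.2⟩

lemma truToBox_substBox (W : ETree A) (h : ¬ W.hasFls) (V V2 : ETree A) :
    W.truToBox.substBox V = W.subst V V2 := by
  induction W with
  | tru => rfl
  | fls => exact absurd trivial h
  | node l a r ihl ihr =>
    simp only [ETree.hasFls, not_or] at h
    simp only [ETree.truToBox, ETreeB.substBox, ETree.subst, ihl h.1, ihr h.2]

end TsdAux

/-- T-*-decomposition theorem (FEL). -/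
theorem fel_tsd_theorem (A : Type) [Countable A] (P Q : FTerm A)
    (hP : IsFT_T P) (hQ : IsFT_Star Q) :
    IsTsdF (fe (FTerm.and P Q)) (fe P).truToBox (fe Q) ∧
    ∀ (Y : ETreeB A) (Z : ETree A),
      IsTsdF (fe (FTerm.and P Q)) Y Z → Y = (fe P).truToBox ∧ Z = fe Q := by
  obtain ⟨hT2, hF2, hI2⟩ := TsdAux.star_good Q hQ
  have hPnF : ¬ (fe P).hasFls := TsdAux.tterm_no_fls hP
  have hfe : fe (FTerm.and P Q) = (fe P).truToBox.substBox (fe Q) := by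
    show (fe P).subst (fe Q) _ = _
    exact (TsdAux.truToBox_substBox (fe P) hPnF (fe Q) _).symm
  constructor
  · exact ⟨hfe, TsdAux.truToBox_not_hasTru _, TsdAux.truToBox_not_hasFls _ hPnF, hI2⟩
  · intro Y Z hYZ
    obtain ⟨heq, hYT, hYF, hZI⟩ := hYZ
    exact TsdAux.uniq_decomp Y ((fe P).truToBox) Z (fe Q) (heq.symm.trans hfe)
      hYT hYF (TsdAux.truToBox_not_hasTru _) (TsdAux.truToBox_not_hasFls _ hPnF) hZI hI2
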